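/- arXiv:1908.01169 — 4 statements merged into one kernel-verified Lean document; each statement's English description precedes it below -/
import Mathlib

section
/- Let X₃ = ∂_β, X₄ = -sin β ∂_α + ℓ cos β (cos α ∂_x + sin α ∂_y), X₂ = [X₃, X₄], and X₁ = [X₄, X₂]. Then at every point, X₁ ∧ X₂ ∧ X₃ ∧ X₄ = ℓ² ∂_x ∧ ∂_y ∧ ∂_α ∧ ∂_β ≠ 0; in particular (X₁, X₂, X₃, X₄) form a frame of the tangent bundle. -/
/-!
Since `X₃ = ∂_β` is constant, `X₂ = ∂_β X₄ = -cos β ∂_α - ℓ sin β (cos α ∂_x + sin α ∂_y)`, and then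
`X₁ = [X₄, X₂] = ℓ (-sin α ∂_x + cos α ∂_y)` after using `sin² β + cos² β = 1`. The matrix with rows
`X₁, X₂, X₃, X₄` has determinant `ℓ²`. A wedge of `n` vectors in an `n`-dimensional space is their
determinant in a basis times the wedge of that basis, and the wedge of a basis is nonzero.
-/

/- Configuration space of the car: M = ℝ⁴ with coordinates
   (x, y, α, β) = (p 0, p 1, p 2, p 3). -/
abbrev Pt : Type := Fin 4 → ℝ
abbrev VF : Type := Pt → Pt

/-- Lie bracket of vector fields on ℝ⁴. -/
noncomputable def lieBracket (X Y : VF) : VF :=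
  fun p => fderiv ℝ Y p (X p) - fderiv ℝ X p (Y p)

/-- X₃ = ∂_β -/
noncomputable def X3 : VF := fun _ => ![0, 0, 0, 1]

/-- X₄ = -sin β ∂_α + ℓ cos β (cos α ∂_x + sin α ∂_y) -/
noncomputable def X4 (ℓ : ℝ) : VF :=
  fun p => ![ℓ * Real.cos (p 3) * Real.cos (p 2),
             ℓ * Real.cos (p 3) * Real.sin (p 2),
             -Real.sin (p 3), 0]

/-- X₂ = [X₃, X₄] -/
noncomputable def X2 (ℓ : ℝ) : VF := lieBracket X3 (X4 ℓ)
/-- X₁ = [X₄, X₂] -/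
noncomputable def X1 (ℓ : ℝ) : VF := lieBracket (X4 ℓ) (X2 ℓ)

/-- standard coordinate vector fields ∂_x, ∂_y, ∂_α, ∂_β as constant vectors -/
noncomputable def coordVec (i : Fin 4) : Pt := Pi.single i 1

theorem AlternatingMap.apply_eq_basis_det_smul {R M N ι : Type*} [CommRing R] [AddCommGroup M]
    [Module R M] [AddCommGroup N] [Module R N] [Fintype ι] [DecidableEq ι]
    (f : M [⋀^ι]→ₗ[R] N) (e : Module.Basis ι R M) (v : ι → M) : f v = e.det v • f e := by
  suffices h : f = e.det.smulRight (f e) from DFunLike.congr_fun h v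
  refine e.ext_alternating fun i hi => ?_
  let σ : Equiv.Perm ι := Equiv.ofBijective i (Finite.injective_iff_bijective.1 hi)
  change f (e ∘ σ) = e.det.smulRight (f e) (e ∘ σ)
  simp [AlternatingMap.map_perm, Module.Basis.det_self]

namespace ExteriorAlgebra

theorem ι_mul_ι_mul_ι_mul_ι {R M : Type*} [CommRing R] [AddCommGroup M] [Module R M]
    (a b c d : M) : ι R a * ι R b * ι R c * ι R d = ιMulti R 4 ![a, b, c, d] := by
  simp [ιMulti_apply, mul_assoc]

theorem ιMulti_basis_ne_zero {R M : Type*} [CommRing R] [Nontrivial R] [AddCommGroup M]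
    [Module R M] {n : ℕ} (b : Module.Basis (Fin n) R M) : ιMulti R n b ≠ 0 := by
  have hrefl : ∀ f : Fin n ↪o Fin n, f = RelEmbedding.refl _ := fun f =>
    (Finset.orderEmbOfFin_unique' (s := .univ) (Finset.card_fin n) (by simp)).trans
      (Finset.orderEmbOfFin_unique' _ (by simp)).symm
  have h := b.ExteriorAlgebra.ne_zero Finset.univ
  rwa [basis_apply_ofCard b (Finset.card_fin n), ιMulti_family,
    hrefl (Set.powersetCard.ofFinEmbEquiv.symm _)] at h

end ExteriorAlgebra

theorem fderiv_apply_apply {𝕜 E F ι : Type*} [NontriviallyNormedField 𝕜] [NormedAddCommGroup E]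
    [NormedSpace 𝕜 E] [NormedAddCommGroup F] [NormedSpace 𝕜 F] [Fintype ι] {f : E → ι → F}
    {x : E} (hf : DifferentiableAt 𝕜 f x) (v : E) (i : ι) :
    fderiv 𝕜 f x v i = fderiv 𝕜 (fun y => f y i) x v := by
  rw [fderiv_apply hf]
  rfl

lemma differentiable_X4 (ℓ : ℝ) : Differentiable ℝ (X4 ℓ) :=
  differentiable_pi.2 fun i => by fin_cases i <;> simp [X4] <;> fun_prop

lemma X2_eq (ℓ : ℝ) : X2 ℓ = fun p => ![-(ℓ * Real.sin (p 3) * Real.cos (p 2)),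
    -(ℓ * Real.sin (p 3) * Real.sin (p 2)), -Real.cos (p 3), 0] := by
  ext p i
  rw [X2, lieBracket, show fderiv ℝ X3 p = 0 from fderiv_const_apply _,
    zero_apply, sub_zero, fderiv_apply_apply (differentiable_X4 ℓ p)]
  fin_cases i <;> simp (disch := fun_prop) [X3, X4, fderiv_fun_mul, fderiv_cos, fderiv_sin,
    (hasFDerivAt_apply _ _).fderiv] <;> ring

lemma differentiable_X2 (ℓ : ℝ) : Differentiable ℝ (X2 ℓ) := by
  rw [X2_eq]
  exact differentiable_pi.2 fun i => by fin_cases i <;> simp <;> fun_prop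

lemma X1_eq (ℓ : ℝ) : X1 ℓ = fun p => ![-(ℓ * Real.sin (p 2)), ℓ * Real.cos (p 2), 0, 0] := by
  ext p i
  rw [X1, lieBracket, Pi.sub_apply, fderiv_apply_apply (differentiable_X4 ℓ p),
    fderiv_apply_apply (differentiable_X2 ℓ p), X2_eq]
  fin_cases i <;> simp (disch := fun_prop) [X4, fderiv_fun_mul, fderiv_cos, fderiv_sin,
    (hasFDerivAt_apply _ _).fderiv]
  · linear_combination (-(ℓ * Real.sin (p 2))) * Real.sin_sq_add_cos_sq (p 3)
  · linear_combination (ℓ * Real.cos (p 2)) * Real.sin_sq_add_cos_sq (p 3)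

lemma det_frame (ℓ : ℝ) (p : Pt) :
    (Pi.basisFun ℝ (Fin 4)).det ![X1 ℓ p, X2 ℓ p, X3 p, X4 ℓ p] = ℓ ^ 2 := by
  rw [Pi.basisFun_det]
  change Matrix.det (Matrix.of ![X1 ℓ p, X2 ℓ p, X3 p, X4 ℓ p]) = _
  rw [Matrix.det_succ_row_zero]
  simp only [X1_eq, X2_eq, X3, X4]
  simp [Fin.sum_univ_succ, Matrix.det_fin_three, Fin.succAbove]
  linear_combination ℓ ^ 2 * (Real.sin (p 3) ^ 2 + Real.cos (p 3) ^ 2) *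
      Real.sin_sq_add_cos_sq (p 2) + ℓ ^ 2 * Real.sin_sq_add_cos_sq (p 3)

lemma coordVec_family :
    ![coordVec 0, coordVec 1, coordVec 2, coordVec 3] = Pi.basisFun ℝ (Fin 4) := by
  ext i : 1
  fin_cases i <;> simp [coordVec]

open ExteriorAlgebra in
/-- at every point, X₁ ∧ X₂ ∧ X₃ ∧ X₄ = ℓ² ∂_x ∧ ∂_y ∧ ∂_α ∧ ∂_β ≠ 0,
    and (X₁, X₂, X₃, X₄) is a frame (pointwise linearly independent). -/
theorem car_frame (ℓ : ℝ) (hℓ : 0 < ℓ) : ∀ p : Pt,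
    ι ℝ (X1 ℓ p) * ι ℝ (X2 ℓ p) * ι ℝ (X3 p) * ι ℝ (X4 ℓ p) =
      (ℓ ^ 2) • (ι ℝ (coordVec 0) * ι ℝ (coordVec 1) * ι ℝ (coordVec 2) * ι ℝ (coordVec 3)
        : ExteriorAlgebra ℝ Pt) ∧
    ι ℝ (X1 ℓ p) * ι ℝ (X2 ℓ p) * ι ℝ (X3 p) * ι ℝ (X4 ℓ p) ≠ (0 : ExteriorAlgebra ℝ Pt) ∧
    LinearIndependent ℝ ![X1 ℓ p, X2 ℓ p, X3 p, X4 ℓ p] := by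
  intro p
  have hwedge : ι ℝ (X1 ℓ p) * ι ℝ (X2 ℓ p) * ι ℝ (X3 p) * ι ℝ (X4 ℓ p) =
      (ℓ ^ 2) • ιMulti ℝ 4 (Pi.basisFun ℝ (Fin 4)) := by
    rw [ι_mul_ι_mul_ι_mul_ι, AlternatingMap.apply_eq_basis_det_smul _ (Pi.basisFun ℝ (Fin 4)),
      det_frame]
  refine ⟨?_, ?_, ?_⟩
  · rw [hwedge, ι_mul_ι_mul_ι_mul_ι, coordVec_family]
  · rw [hwedge]
    exact smul_ne_zero (pow_ne_zero 2 hℓ.ne') (ιMulti_basis_ne_zero _)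
  · refine ((Pi.basisFun ℝ (Fin 4)).is_basis_iff_det.2 ?_).1
    rw [det_frame]
    exact (pow_ne_zero 2 hℓ.ne').isUnit
end

section
/- The distribution D spanned by X₃ = ∂_β and X₄ = -sin β ∂_α + ℓ cos β (cos α ∂_x + sin α ∂_y) is an Engel distribution: the derived distributions D₋₁ = D, D₋₂ = [D₋₁, D₋₁], D₋₃ = [D₋₁, D₋₂] have constant ranks 2, 3, 4 respectively. -/
/-- A (smooth) section of a distribution `D`, viewed as a field of subspaces of ℝ⁴. -/
def IsSection (D : Pt → Submodule ℝ Pt) (X : VF) : Prop :=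
  ContDiff ℝ (⊤ : ℕ∞) X ∧ ∀ p, X p ∈ D p

/-- The distribution [D₁, D₂]: at each point, the span of the values of sections of D₁ and
    of D₂ together with the values of Lie brackets of a section of D₁ with a section of D₂. -/
noncomputable def derived (D1 D2 : Pt → Submodule ℝ Pt) : Pt → Submodule ℝ Pt :=
  fun p => Submodule.span ℝ
    ({v | ∃ X : VF, IsSection D1 X ∧ v = X p} ∪
     {v | ∃ X : VF, IsSection D2 X ∧ v = X p} ∪
     {v | ∃ X Y : VF, IsSection D1 X ∧ IsSection D2 Y ∧
          v = lieBracket X Y p})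

/-- The car distribution D = span(X₃, X₄). -/
noncomputable def carD (ℓ : ℝ) : Pt → Submodule ℝ Pt :=
  fun p => Submodule.span ℝ {X3 p, X4 ℓ p}

/-! ### auxiliary vector fields -/

noncomputable def Bv (ℓ : ℝ) : VF :=
  fun p => ![-(ℓ * Real.sin (p 3) * Real.cos (p 2)),
             -(ℓ * Real.sin (p 3) * Real.sin (p 2)),
             -Real.cos (p 3), 0]

noncomputable def Cv (ℓ : ℝ) : VF :=
  fun p => ![-(ℓ * Real.sin (p 2)), ℓ * Real.cos (p 2), 0, 0]

open ContinuousLinearMap in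
noncomputable def L4 (ℓ : ℝ) (p : Pt) : Pt →L[ℝ] Pt :=
  (proj 2 : Pt →L[ℝ] ℝ).smulRight
    ![-(ℓ * Real.cos (p 3) * Real.sin (p 2)), ℓ * Real.cos (p 3) * Real.cos (p 2), 0, 0]
  + (proj 3 : Pt →L[ℝ] ℝ).smulRight (Bv ℓ p)

open ContinuousLinearMap in
noncomputable def LB (ℓ : ℝ) (p : Pt) : Pt →L[ℝ] Pt :=
  (proj 2 : Pt →L[ℝ] ℝ).smulRight
    ![ℓ * Real.sin (p 3) * Real.sin (p 2), -(ℓ * Real.sin (p 3) * Real.cos (p 2)), 0, 0]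
  + (proj 3 : Pt →L[ℝ] ℝ).smulRight
    ![-(ℓ * Real.cos (p 3) * Real.cos (p 2)), -(ℓ * Real.cos (p 3) * Real.sin (p 2)),
      Real.sin (p 3), 0]

/-! ### derivatives -/

attribute [fun_prop] Real.contDiff_cos Real.contDiff_sin

lemma hcos2 (p : Pt) : HasFDerivAt (fun x : Pt => Real.cos (x 2))
    ((-Real.sin (p 2)) • (ContinuousLinearMap.proj 2 : Pt →L[ℝ] ℝ)) p :=
  (Real.hasDerivAt_cos (p 2)).comp_hasFDerivAt (f := fun x : Pt => x 2) p (hasFDerivAt_apply 2 p)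
lemma hsin2 (p : Pt) : HasFDerivAt (fun x : Pt => Real.sin (x 2))
    ((Real.cos (p 2)) • (ContinuousLinearMap.proj 2 : Pt →L[ℝ] ℝ)) p :=
  (Real.hasDerivAt_sin (p 2)).comp_hasFDerivAt (f := fun x : Pt => x 2) p (hasFDerivAt_apply 2 p)
lemma hcos3 (p : Pt) : HasFDerivAt (fun x : Pt => Real.cos (x 3))
    ((-Real.sin (p 3)) • (ContinuousLinearMap.proj 3 : Pt →L[ℝ] ℝ)) p :=
  (Real.hasDerivAt_cos (p 3)).comp_hasFDerivAt (f := fun x : Pt => x 3) p (hasFDerivAt_apply 3 p)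
lemma hsin3 (p : Pt) : HasFDerivAt (fun x : Pt => Real.sin (x 3))
    ((Real.cos (p 3)) • (ContinuousLinearMap.proj 3 : Pt →L[ℝ] ℝ)) p :=
  (Real.hasDerivAt_sin (p 3)).comp_hasFDerivAt (f := fun x : Pt => x 3) p (hasFDerivAt_apply 3 p)

lemma hX4 (ℓ : ℝ) (p : Pt) : HasFDerivAt (X4 ℓ) (L4 ℓ p) p := by
  apply hasFDerivAt_pi''
  intro i
  fin_cases i
  · refine ((((hcos3 p).const_mul ℓ).mul (hcos2 p))).congr_fderiv ?_
    ext v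
    simp [L4, Bv, ContinuousLinearMap.smulRight_apply]
    ring
  · refine ((((hcos3 p).const_mul ℓ).mul (hsin2 p))).congr_fderiv ?_
    ext v
    simp [L4, Bv, ContinuousLinearMap.smulRight_apply]
    ring
  · refine ((hsin3 p).neg).congr_fderiv ?_
    ext v
    simp [L4, Bv, ContinuousLinearMap.smulRight_apply]
    ring
  · refine (hasFDerivAt_const (𝕜 := ℝ) (0:ℝ) p).congr_fderiv ?_
    ext v
    simp [L4, Bv, ContinuousLinearMap.smulRight_apply]

lemma hBv (ℓ : ℝ) (p : Pt) : HasFDerivAt (Bv ℓ) (LB ℓ p) p := by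
  apply hasFDerivAt_pi''
  intro i
  fin_cases i
  · refine ((((hsin3 p).const_mul ℓ).mul (hcos2 p)).neg).congr_fderiv ?_
    ext v
    simp [LB, ContinuousLinearMap.smulRight_apply]
    ring
  · refine ((((hsin3 p).const_mul ℓ).mul (hsin2 p)).neg).congr_fderiv ?_
    ext v
    simp [LB, ContinuousLinearMap.smulRight_apply]
    ring
  · refine ((hcos3 p).neg).congr_fderiv ?_
    ext v
    simp [LB, ContinuousLinearMap.smulRight_apply]
    ring
  · refine (hasFDerivAt_const (𝕜 := ℝ) (0:ℝ) p).congr_fderiv ?_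
    ext v
    simp [LB, ContinuousLinearMap.smulRight_apply]

lemma cdX4 (ℓ : ℝ) : ContDiff ℝ (⊤ : ℕ∞) (X4 ℓ) := by
  rw [contDiff_pi]
  intro i
  fin_cases i
  · show ContDiff ℝ (⊤ : ℕ∞) (fun p : Pt => ℓ * Real.cos (p 3) * Real.cos (p 2))
    fun_prop
  · show ContDiff ℝ (⊤ : ℕ∞) (fun p : Pt => ℓ * Real.cos (p 3) * Real.sin (p 2))
    fun_prop
  · show ContDiff ℝ (⊤ : ℕ∞) (fun p : Pt => -Real.sin (p 3))
    fun_prop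
  · exact contDiff_const

lemma cdBv (ℓ : ℝ) : ContDiff ℝ (⊤ : ℕ∞) (Bv ℓ) := by
  rw [contDiff_pi]
  intro i
  fin_cases i
  · show ContDiff ℝ (⊤ : ℕ∞) (fun p : Pt => -(ℓ * Real.sin (p 3) * Real.cos (p 2)))
    fun_prop
  · show ContDiff ℝ (⊤ : ℕ∞) (fun p : Pt => -(ℓ * Real.sin (p 3) * Real.sin (p 2)))
    fun_prop
  · show ContDiff ℝ (⊤ : ℕ∞) (fun p : Pt => -Real.cos (p 3))
    fun_prop
  · exact contDiff_const

lemma fderiv_X3 (p : Pt) : fderiv ℝ X3 p = 0 :=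
  (hasFDerivAt_const _ _).fderiv

lemma L4_X3 (ℓ : ℝ) (p : Pt) : L4 ℓ p (X3 p) = Bv ℓ p := by
  funext i
  fin_cases i <;>
    simp [L4, X3, Bv, ContinuousLinearMap.smulRight_apply]

lemma bracket34 (ℓ : ℝ) : lieBracket X3 (X4 ℓ) = Bv ℓ := by
  funext p
  show fderiv ℝ (X4 ℓ) p (X3 p) - fderiv ℝ X3 p (X4 ℓ p) = Bv ℓ p
  rw [(hX4 ℓ p).fderiv, fderiv_X3, L4_X3]
  simp

lemma bracket4B (ℓ : ℝ) : lieBracket (X4 ℓ) (Bv ℓ) = Cv ℓ := by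
  funext p
  show fderiv ℝ (Bv ℓ) p (X4 ℓ p) - fderiv ℝ (X4 ℓ) p (Bv ℓ p) = Cv ℓ p
  rw [(hBv ℓ p).fderiv, (hX4 ℓ p).fderiv]
  funext i
  fin_cases i
  · simp [L4, LB, X4, Bv, Cv, ContinuousLinearMap.smulRight_apply]
    linear_combination (-(ℓ * Real.sin (p 2))) * Real.sin_sq_add_cos_sq (p 3)
  · simp [L4, LB, X4, Bv, Cv, ContinuousLinearMap.smulRight_apply]
    linear_combination (ℓ * Real.cos (p 2)) * Real.sin_sq_add_cos_sq (p 3)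
  · simp [L4, LB, X4, Bv, Cv, ContinuousLinearMap.smulRight_apply]
  · simp [L4, LB, X4, Bv, Cv, ContinuousLinearMap.smulRight_apply]

/-! ### positivity of the denominator -/

lemma denom_pos {ℓ : ℝ} (hℓ : 0 < ℓ) (t : ℝ) :
    0 < ℓ ^ 2 * Real.cos t ^ 2 + Real.sin t ^ 2 := by
  rcases eq_or_ne (Real.sin t) 0 with h | h
  · have hc : Real.cos t ^ 2 = 1 := by
      have := Real.sin_sq_add_cos_sq t
      rw [h] at this; nlinarith
    rw [h, hc]; nlinarith
  · have : 0 < Real.sin t ^ 2 := by positivity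
    nlinarith [sq_nonneg (ℓ * Real.cos t)]

/-! ### smooth coefficients for sections of carD -/

lemma coeffs {ℓ : ℝ} (hℓ : 0 < ℓ) {X : VF} (hX : IsSection (carD ℓ) X) :
    ∃ a b : Pt → ℝ, ContDiff ℝ (⊤ : ℕ∞) a ∧ ContDiff ℝ (⊤ : ℕ∞) b ∧
      ∀ p, X p = a p • X3 p + b p • X4 ℓ p := by
  refine ⟨fun p => X p 3,
    fun p => (X p 0 * (ℓ * Real.cos (p 3) * Real.cos (p 2))
            + X p 1 * (ℓ * Real.cos (p 3) * Real.sin (p 2))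
            + X p 2 * (-Real.sin (p 3)))
          / (ℓ ^ 2 * Real.cos (p 3) ^ 2 + Real.sin (p 3) ^ 2), ?_, ?_, ?_⟩
  · exact (ContinuousLinearMap.proj (R := ℝ) (φ := fun _ : Fin 4 => ℝ) 3).contDiff.comp hX.1
  · have h0 : ContDiff ℝ (⊤ : ℕ∞) (fun p : Pt => X p 0) :=
      (ContinuousLinearMap.proj (R := ℝ) (φ := fun _ : Fin 4 => ℝ) 0).contDiff.comp hX.1
    have h1 : ContDiff ℝ (⊤ : ℕ∞) (fun p : Pt => X p 1) :=
      (ContinuousLinearMap.proj (R := ℝ) (φ := fun _ : Fin 4 => ℝ) 1).contDiff.comp hX.1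
    have h2 : ContDiff ℝ (⊤ : ℕ∞) (fun p : Pt => X p 2) :=
      (ContinuousLinearMap.proj (R := ℝ) (φ := fun _ : Fin 4 => ℝ) 2).contDiff.comp hX.1
    apply ContDiff.div
    · fun_prop
    · fun_prop
    · intro p
      exact (denom_pos hℓ (p 3)).ne'
  · intro p
    obtain ⟨u, v, huv⟩ := Submodule.mem_span_pair.1 (hX.2 p)
    have h0 : X p 0 = v * (ℓ * Real.cos (p 3) * Real.cos (p 2)) := by
      rw [← huv]; simp [X3, X4]
    have h1 : X p 1 = v * (ℓ * Real.cos (p 3) * Real.sin (p 2)) := by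
      rw [← huv]; simp [X3, X4]
    have h2 : X p 2 = v * (-Real.sin (p 3)) := by
      rw [← huv]; simp [X3, X4]
    have h3 : X p 3 = u := by
      rw [← huv]; simp [X3, X4]
    have hb : (X p 0 * (ℓ * Real.cos (p 3) * Real.cos (p 2))
            + X p 1 * (ℓ * Real.cos (p 3) * Real.sin (p 2))
            + X p 2 * (-Real.sin (p 3)))
          / (ℓ ^ 2 * Real.cos (p 3) ^ 2 + Real.sin (p 3) ^ 2) = v := by
      rw [h0, h1, h2]
      rw [div_eq_iff (denom_pos hℓ (p 3)).ne']
      linear_combination (v * ℓ ^ 2 * Real.cos (p 3) ^ 2) * Real.sin_sq_add_cos_sq (p 2)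
    simp only [hb, h3]
    exact huv.symm

/-! ### the key lemma: brackets of sections of carD live in span {X3, X4, Bv} -/

lemma key {ℓ : ℝ} (hℓ : 0 < ℓ) {X Y : VF} (hX : IsSection (carD ℓ) X)
    (hY : IsSection (carD ℓ) Y) (p : Pt) :
    lieBracket X Y p ∈ Submodule.span ℝ ({X3 p, X4 ℓ p, Bv ℓ p} : Set Pt) := by
  obtain ⟨a, b, ha, hb, hab⟩ := coeffs hℓ hX
  obtain ⟨c, d, hc, hd, hcd⟩ := coeffs hℓ hY
  have hXeq : X = fun q => a q • X3 p + b q • X4 ℓ q := by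
    funext q; rw [hab q]; rfl
  have hYeq : Y = fun q => c q • X3 p + d q • X4 ℓ q := by
    funext q; rw [hcd q]; rfl
  have hXd : HasFDerivAt X
      ((fderiv ℝ a p).smulRight (X3 p) +
        (b p • L4 ℓ p + (fderiv ℝ b p).smulRight (X4 ℓ p))) p := by
    rw [hXeq]
    exact (((ha.differentiable (by simp) p).hasFDerivAt).smul_const (X3 p)).add
      (((hb.differentiable (by simp) p).hasFDerivAt).smul (hX4 ℓ p))
  have hYd : HasFDerivAt Y
      ((fderiv ℝ c p).smulRight (X3 p) +
        (d p • L4 ℓ p + (fderiv ℝ d p).smulRight (X4 ℓ p))) p := by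
    rw [hYeq]
    exact (((hc.differentiable (by simp) p).hasFDerivAt).smul_const (X3 p)).add
      (((hd.differentiable (by simp) p).hasFDerivAt).smul (hX4 ℓ p))
  have hL4X3 : L4 ℓ p (X3 p) = Bv ℓ p := L4_X3 ℓ p
  have expand : lieBracket X Y p =
      ((fderiv ℝ c p) (X p) - (fderiv ℝ a p) (Y p)) • X3 p
      + ((fderiv ℝ d p) (X p) - (fderiv ℝ b p) (Y p)) • X4 ℓ p
      + (d p * a p - b p * c p) • Bv ℓ p := by
    show fderiv ℝ Y p (X p) - fderiv ℝ X p (Y p) = _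
    rw [hXd.fderiv, hYd.fderiv]
    rw [hab p, hcd p]
    simp only [ContinuousLinearMap.add_apply, ContinuousLinearMap.smul_apply,
      ContinuousLinearMap.smulRight_apply, map_add, map_smul, hL4X3, smul_eq_mul]
    module
  rw [expand]
  refine Submodule.add_mem _ (Submodule.add_mem _ ?_ ?_) ?_
  · exact Submodule.smul_mem _ _ (Submodule.subset_span (Set.mem_insert _ _))
  · exact Submodule.smul_mem _ _ (Submodule.subset_span
      (Set.mem_insert_of_mem _ (Set.mem_insert _ _)))
  · exact Submodule.smul_mem _ _ (Submodule.subset_span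
      (Set.mem_insert_of_mem _ (Set.mem_insert_of_mem _ rfl)))

lemma li4 {ℓ : ℝ} (hℓ : 0 < ℓ) (p : Pt) :
    LinearIndependent ℝ ![X3 p, X4 ℓ p, Bv ℓ p, Cv ℓ p] := by
  rw [Fintype.linearIndependent_iff]
  intro g hg
  have e0 := congrFun hg 0
  have e1 := congrFun hg 1
  have e2 := congrFun hg 2
  have e3 := congrFun hg 3
  simp [Fin.sum_univ_four, X3, X4, Bv, Cv, Matrix.vecHead, Matrix.vecTail] at e0 e1 e2 e3
  have hℓ' : ℓ ≠ 0 := hℓ.ne'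
  have h1 : ℓ * (g 1 * Real.cos (p 3) - g 2 * Real.sin (p 3)) = 0 := by
    linear_combination Real.cos (p 2) * e0 + Real.sin (p 2) * e1 +
      (-(ℓ * (g 1 * Real.cos (p 3) - g 2 * Real.sin (p 3)))) * Real.sin_sq_add_cos_sq (p 2)
  have hg12 : g 1 * Real.cos (p 3) - g 2 * Real.sin (p 3) = 0 :=
    (mul_eq_zero.1 h1).resolve_left hℓ'
  have h2' : g 1 * Real.sin (p 3) + g 2 * Real.cos (p 3) = 0 := by linarith [e2]
  have hg1 : g 1 = 0 := by
    linear_combination Real.cos (p 3) * hg12 + Real.sin (p 3) * h2' +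
      (-(g 1)) * Real.sin_sq_add_cos_sq (p 3)
  have hg2 : g 2 = 0 := by
    linear_combination (-Real.sin (p 3)) * hg12 + Real.cos (p 3) * h2' +
      (-(g 2)) * Real.sin_sq_add_cos_sq (p 3)
  have h3 : ℓ * g 3 = 0 := by
    linear_combination (-Real.sin (p 2)) * e0 + Real.cos (p 2) * e1 +
      (-(ℓ * g 3)) * Real.sin_sq_add_cos_sq (p 2)
  have hg3 : g 3 = 0 := (mul_eq_zero.1 h3).resolve_left hℓ'
  have hg0 : g 0 = 0 := by linarith [e3]
  intro i
  fin_cases i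
  · exact hg0
  · exact hg1
  · exact hg2
  · exact hg3

lemma li3 {ℓ : ℝ} (hℓ : 0 < ℓ) (p : Pt) :
    LinearIndependent ℝ ![X3 p, X4 ℓ p, Bv ℓ p] := by
  have h : ![X3 p, X4 ℓ p, Bv ℓ p]
      = ![X3 p, X4 ℓ p, Bv ℓ p, Cv ℓ p] ∘ Fin.castLE (by norm_num) := by
    funext i; fin_cases i <;> rfl
  rw [h]
  exact (li4 hℓ p).comp _ (Fin.castLE_injective _)

lemma li2 {ℓ : ℝ} (hℓ : 0 < ℓ) (p : Pt) :
    LinearIndependent ℝ ![X3 p, X4 ℓ p] := by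
  have h : ![X3 p, X4 ℓ p]
      = ![X3 p, X4 ℓ p, Bv ℓ p, Cv ℓ p] ∘ Fin.castLE (by norm_num) := by
    funext i; fin_cases i <;> rfl
  rw [h]
  exact (li4 hℓ p).comp _ (Fin.castLE_injective _)

/-! ### membership helpers -/

lemma mem_derived_left {D1 D2 : Pt → Submodule ℝ Pt} {X : VF} (h : IsSection D1 X) (p : Pt) :
    X p ∈ derived D1 D2 p :=
  Submodule.subset_span (Or.inl (Or.inl ⟨X, h, rfl⟩))

lemma mem_derived_right {D1 D2 : Pt → Submodule ℝ Pt} {X : VF} (h : IsSection D2 X) (p : Pt) :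
    X p ∈ derived D1 D2 p :=
  Submodule.subset_span (Or.inl (Or.inr ⟨X, h, rfl⟩))

lemma mem_derived_bracket {D1 D2 : Pt → Submodule ℝ Pt} {X Y : VF}
    (hX : IsSection D1 X) (hY : IsSection D2 Y) (p : Pt) :
    lieBracket X Y p ∈ derived D1 D2 p :=
  Submodule.subset_span (Or.inr ⟨X, Y, hX, hY, rfl⟩)

lemma secX3 (ℓ : ℝ) : IsSection (carD ℓ) X3 :=
  ⟨contDiff_const, fun q => Submodule.subset_span (Set.mem_insert _ _)⟩

lemma secX4 (ℓ : ℝ) : IsSection (carD ℓ) (X4 ℓ) :=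
  ⟨cdX4 ℓ, fun q => Submodule.subset_span (Set.mem_insert_of_mem _ rfl)⟩

lemma secBv (ℓ : ℝ) : IsSection (derived (carD ℓ) (carD ℓ)) (Bv ℓ) := by
  refine ⟨cdBv ℓ, fun q => ?_⟩
  rw [← bracket34 ℓ]
  exact mem_derived_bracket (secX3 ℓ) (secX4 ℓ) q

lemma range2 (a b : Pt) : Set.range ![a, b] = {a, b} := by
  ext x; simp [Matrix.range_cons, Matrix.range_empty]; tauto

lemma range3 (a b c : Pt) : Set.range ![a, b, c] = {a, b, c} := by
  ext x; simp [Matrix.range_cons, Matrix.range_empty]; tauto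

lemma range4 (a b c d : Pt) : Set.range ![a, b, c, d] = {a, b, c, d} := by
  ext x; simp [Matrix.range_cons, Matrix.range_empty]; tauto

lemma finrank_Pt : Module.finrank ℝ Pt = 4 := by
  simp [Module.finrank_pi]

/-- the car distribution is an Engel distribution: the derived flag
    D₋₁ = D, D₋₂ = [D₋₁,D₋₁], D₋₃ = [D₋₁,D₋₂] has constant ranks 2, 3, 4. -/
theorem car_engel (ℓ : ℝ) (hℓ : 0 < ℓ) : ∀ p : Pt,
    Module.finrank ℝ (carD ℓ p) = 2 ∧
    Module.finrank ℝ (derived (carD ℓ) (carD ℓ) p) = 3 ∧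
    Module.finrank ℝ (derived (carD ℓ) (derived (carD ℓ) (carD ℓ)) p) = 4 := by
  intro p
  refine ⟨?_, ?_, ?_⟩
  · have h : carD ℓ p = Submodule.span ℝ (Set.range ![X3 p, X4 ℓ p]) := by
      rw [range2]; rfl
    rw [h, finrank_span_eq_card (li2 hℓ p)]
    simp
  · have hD2 : derived (carD ℓ) (carD ℓ) p
        = Submodule.span ℝ ({X3 p, X4 ℓ p, Bv ℓ p} : Set Pt) := by
      apply le_antisymm
      · apply Submodule.span_le.2
        rintro v hv
        simp only [Set.mem_union, Set.mem_setOf_eq] at hv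
        have hsub : ({X3 p, X4 ℓ p} : Set Pt) ⊆ {X3 p, X4 ℓ p, Bv ℓ p} := by
          intro x hx
          rcases hx with h | h
          · exact Or.inl h
          · exact Or.inr (Or.inl h)
        rcases hv with (⟨X, hX, rfl⟩ | ⟨X, hX, rfl⟩) | ⟨X, Y, hX, hY, rfl⟩
        · exact Submodule.span_mono hsub (hX.2 p)
        · exact Submodule.span_mono hsub (hX.2 p)
        · exact key hℓ hX hY p
      · apply Submodule.span_le.2
        rintro v hv
        simp only [Set.mem_insert_iff, Set.mem_singleton_iff] at hv
        rcases hv with rfl | rfl | rfl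
        · exact mem_derived_left (secX3 ℓ) p
        · exact mem_derived_left (secX4 ℓ) p
        · rw [← bracket34 ℓ]
          exact mem_derived_bracket (secX3 ℓ) (secX4 ℓ) p
    rw [hD2, ← range3, finrank_span_eq_card (li3 hℓ p)]
    simp
  · have hlow : Submodule.span ℝ (Set.range ![X3 p, X4 ℓ p, Bv ℓ p, Cv ℓ p])
        ≤ derived (carD ℓ) (derived (carD ℓ) (carD ℓ)) p := by
      apply Submodule.span_le.2
      rw [range4]
      rintro v hv
      simp only [Set.mem_insert_iff, Set.mem_singleton_iff] at hv
      rcases hv with rfl | rfl | rfl | rfl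
      · exact mem_derived_left (secX3 ℓ) p
      · exact mem_derived_left (secX4 ℓ) p
      · exact mem_derived_right (secBv ℓ) p
      · rw [← bracket4B ℓ]
        exact mem_derived_bracket (secX4 ℓ) (secBv ℓ) p
    have h4 : Module.finrank ℝ
        (Submodule.span ℝ (Set.range ![X3 p, X4 ℓ p, Bv ℓ p, Cv ℓ p])) = 4 := by
      rw [finrank_span_eq_card (li4 hℓ p)]; simp
    have hub := (Submodule.finrank_le (derived (carD ℓ) (derived (carD ℓ) (carD ℓ)) p)).trans_eq
      finrank_Pt
    have hlb := Submodule.finrank_mono hlow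
    rw [h4] at hlb
    omega
end

section
/- Under the change of coordinates p = tan α, q = -ℓ⁻¹ tan β sec³ α (valid for |α| < π/2, |β| < π/2), the vector field X₄ = -sin β ∂_α + ℓ cos β (cos α ∂_x + sin α ∂_y) satisfies X₄ = ℓ cos α cos β · Y, where Y = ∂_x + p ∂_y + q ∂_p + (3pq²/(1+p²)) ∂_q; that is, X₄ is proportional to Y by the nonvanishing factor ℓ cos α cos β. -/
/-- The change of coordinates (x, y, α, β) ↦ (x, y, p, q),
    p = tan α, q = -ℓ⁻¹ tan β sec³ α. -/
noncomputable def Phi (ℓ : ℝ) : Pt → Pt := fun p =>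
  ![p 0, p 1, Real.tan (p 2), -(ℓ⁻¹ * Real.tan (p 3) / (Real.cos (p 2)) ^ 3)]

/-- The total differential vector field Y = ∂_x + p ∂_y + q ∂_p + (3pq²/(1+p²)) ∂_q
    of the ODE y''' = 3 y' (y'')²/(1 + (y')²), in coordinates (x, y, p, q). -/
noncomputable def Ytot : VF := fun q =>
  ![1, q 2, q 3, 3 * q 2 * (q 3) ^ 2 / (1 + (q 2) ^ 2)]

/-- under the coordinate change Phi (on |α| < π/2, |β| < π/2), the
    pushforward of X₄ equals the nonvanishing multiple ℓ cos α cos β of Y. -/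
theorem X4_pushforward (ℓ : ℝ) (hℓ : 0 < ℓ) :
    ∀ p : Pt, |p 2| < Real.pi / 2 → |p 3| < Real.pi / 2 →
      fderiv ℝ (Phi ℓ) p (X4 ℓ p) =
        (ℓ * Real.cos (p 2) * Real.cos (p 3)) • Ytot (Phi ℓ p) := by
  intro p h2 h3
  obtain ⟨h2l, h2r⟩ := abs_lt.mp h2
  obtain ⟨h3l, h3r⟩ := abs_lt.mp h3
  have hcα : Real.cos (p 2) ≠ 0 :=
    (Real.cos_pos_of_mem_Ioo ⟨by linarith, h2r⟩).ne'
  have hcβ : Real.cos (p 3) ≠ 0 :=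
    (Real.cos_pos_of_mem_Ioo ⟨by linarith, h3r⟩).ne'
  set α := p 2 with hα
  set β := p 3 with hβ
  -- projections
  let pr : Fin 4 → (Pt →L[ℝ] ℝ) := fun i => ContinuousLinearMap.proj i
  -- the candidate derivative
  let L : Fin 4 → (Pt →L[ℝ] ℝ) :=
    ![pr 0, pr 1, (1 / Real.cos α ^ 2) • pr 2,
      -(ℓ⁻¹ • ((Real.tan β • ((-(3 * Real.cos α ^ 2 * -Real.sin α) / (Real.cos α ^ 3) ^ 2) • pr 2))
          + (Real.cos α ^ 3)⁻¹ • ((1 / Real.cos β ^ 2) • pr 3)))]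
  have hL : HasFDerivAt (Phi ℓ) (ContinuousLinearMap.pi L) p := by
    rw [hasFDerivAt_pi']
    intro i
    fin_cases i
    · exact (pr 0).hasFDerivAt
    · exact (pr 1).hasFDerivAt
    · exact (Real.hasDerivAt_tan hcα).comp_hasFDerivAt p (pr 2).hasFDerivAt
    · have hA : HasFDerivAt (fun x : Pt => Real.tan (x 3))
          ((1 / Real.cos β ^ 2) • pr 3) p := by
        have := (Real.hasDerivAt_tan hcβ).comp_hasFDerivAt p (pr 3).hasFDerivAt
        exact this
      have hB : HasFDerivAt (fun x : Pt => (Real.cos (x 2) ^ 3)⁻¹)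
          ((-(3 * Real.cos α ^ 2 * -Real.sin α) / (Real.cos α ^ 3) ^ 2) • pr 2) p := by
        have hd : HasDerivAt (fun t : ℝ => (Real.cos t ^ 3)⁻¹)
            (-(3 * Real.cos α ^ 2 * -Real.sin α) / (Real.cos α ^ 3) ^ 2) α := by
          have := ((Real.hasDerivAt_cos α).pow 3).inv (pow_ne_zero 3 hcα)
          exact this.congr_deriv (by norm_num [Pi.pow_apply])
        have := hd.comp_hasFDerivAt p (pr 2).hasFDerivAt
        exact this
      have key : HasFDerivAt (fun x : Pt => -(ℓ⁻¹ * (Real.tan (x 3) * (Real.cos (x 2) ^ 3)⁻¹)))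
          (-(ℓ⁻¹ • ((Real.tan β • ((-(3 * Real.cos α ^ 2 * -Real.sin α) / (Real.cos α ^ 3) ^ 2) • pr 2))
            + (Real.cos α ^ 3)⁻¹ • ((1 / Real.cos β ^ 2) • pr 3)))) p :=
        ((hA.mul hB).const_mul ℓ⁻¹).neg
      have heq : (fun x : Pt => -(ℓ⁻¹ * Real.tan (x 3) / Real.cos (x 2) ^ 3))
          = fun x : Pt => -(ℓ⁻¹ * (Real.tan (x 3) * (Real.cos (x 2) ^ 3)⁻¹)) := by
        funext x; ring
      show HasFDerivAt (fun x : Pt => Phi ℓ x 3) _ p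
      simp only [Phi, Matrix.cons_val_three, Matrix.tail_cons, Matrix.head_cons]
      rw [heq]
      exact key
  rw [hL.fderiv]
  funext i
  have hsc : Real.sin α ^ 2 + Real.cos α ^ 2 = 1 := Real.sin_sq_add_cos_sq α
  have hsc3 : Real.sin β ^ 2 + Real.cos β ^ 2 = 1 := Real.sin_sq_add_cos_sq β
  have hℓ' : ℓ ≠ 0 := hℓ.ne'
  fin_cases i <;>
    simp [L, pr, X4, Phi, Ytot, Real.tan_eq_sin_div_cos, Pi.smul_apply, smul_eq_mul] <;>
    (try simp only [← hα, ← hβ]) <;>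
    (try field_simp) <;>
    (try ring_nf)
  linear_combination Real.sin β ^ 2 * Real.sin α * hsc
end

section
/- If y'''= F(x, y, y', y'') is such that every curve γ(t) = (x(t), y(t), p(t)) in the first jet space with ẏ = p ẋ, p = y', obtained by projecting solution curves, is an unparametrized geodesic of some torsion-free affine connection with Christoffel symbols Γⁱⱼₖ depending only on (x, y, p), then F must be a polynomial of degree at most 3 in y'': F = Γ²₃₃ (y'')³ + (2Γ²₂₃ − Γ³₃₃)(y'')² + (Γ²₂₂ − 2Γ³₂₃) y'' − Γ³₂₂, where all Γ are functions of (x, y, y') only. -/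
/- Elimination of the parameter in the geodesic equations on the first jet space ℝ³
   with coordinates (x, y, p) and frame Z₁ = ∂_y, Z₂ = ∂_x + p∂_y, Z₃ = ∂_p.
   A curve tangent to the contact distribution has frame components
   (γ̇¹, γ̇², γ̇³) = (0, ẋ, ṗ); along a lift of a solution of y''' = F(x, y, y', y'')
   one has p = y', ṗ = ẋ y'', p̈ = ẍ y'' + ẋ² y'''.  The geodesic equations for a
   torsion-free connection with Christoffels Γⁱⱼₖ(x, y, p) read
   ẍ + Γ²₂₂ ẋ² + 2Γ²₂₃ ẋṗ + Γ²₃₃ ṗ² = 0 and p̈ + Γ³₂₂ ẋ² + 2Γ³₂₃ ẋṗ + Γ³₃₃ ṗ² = 0. -/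

/-- if every projected solution curve of y''' = F(x, y, y', y'') is an
    unparametrized geodesic of a torsion-free connection with Christoffel symbols
    depending only on (x, y, p) — i.e. for all velocity data (ẋ ≠ 0, ẍ) compatible with
    the first geodesic equation, substituting ṗ = ẋq and p̈ = ẍq + ẋ²F into the second
    geodesic equation gives zero — then F is the cubic polynomial
    F = Γ²₃₃ q³ + (2Γ²₂₃ − Γ³₃₃) q² + (Γ²₂₂ − 2Γ³₂₃) q − Γ³₂₂ in q = y''. -/
theorem geodesic_elimination_cubic
    (F : ℝ → ℝ → ℝ → ℝ → ℝ)
    (Γ222 Γ223 Γ233 Γ322 Γ323 Γ333 : ℝ → ℝ → ℝ → ℝ)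
    (hgeo : ∀ x y p q xdot xddot : ℝ, xdot ≠ 0 →
      xddot + Γ222 x y p * xdot ^ 2 + 2 * Γ223 x y p * xdot * (xdot * q)
        + Γ233 x y p * (xdot * q) ^ 2 = 0 →
      (xddot * q + xdot ^ 2 * F x y p q) + Γ322 x y p * xdot ^ 2
        + 2 * Γ323 x y p * xdot * (xdot * q) + Γ333 x y p * (xdot * q) ^ 2 = 0) :
    ∀ x y p q : ℝ,
      F x y p q = Γ233 x y p * q ^ 3 + (2 * Γ223 x y p - Γ333 x y p) * q ^ 2
        + (Γ222 x y p - 2 * Γ323 x y p) * q - Γ322 x y p := by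
  intro x y p q
  have h := hgeo x y p q 1
    (-(Γ222 x y p + 2 * Γ223 x y p * q + Γ233 x y p * q ^ 2)) one_ne_zero (by ring)
  linarith [h]
end
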